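/- Let Q : ℝ³ → M₄(ℂ) be measurable with |Q(x)_{jk}| ≤ C_q ⟨x⟩^{-ρ} for all x and all j,k (with C_q > 0, ρ > 1), and let f : ℝ³ → ℂ⁴ be measurable with |f(x)| ≤ C_f ⟨x⟩^{-2} for all x. Then there is a constant C > 0, depending only on C_f, C_q and ρ, such that for every R₀ > 0, every r ≥ 2R₀ and every ω ∈ ℝ³ with |ω| = 1, | ∫_{E₃} α·( ω − (ω − r⁻¹y)/|ω − r⁻¹y|³ ) Q(y) f(y) dy | ≤ C R₀^{−ρ+1}, where E₃ = { y ∈ ℝ³ : |y| > R₀ and |rω − y| > r/2 }. -/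

import Mathlib

open MeasureTheory Real Filter

noncomputable section

abbrev R3 := EuclideanSpace ℝ (Fin 3)
abbrev C4 := EuclideanSpace ℂ (Fin 4)
abbrev C2 := EuclideanSpace ℂ (Fin 2)

/-- The Pauli matrices. -/
def pauli : Fin 3 → Matrix (Fin 2) (Fin 2) ℂ
  | 0 => !![0, 1; 1, 0]
  | 1 => !![0, -Complex.I; Complex.I, 0]
  | 2 => !![1, 0; 0, -1]

/-- The Dirac matrices `α_j`. -/
def dirac (j : Fin 3) : Matrix (Fin 4) (Fin 4) ℂ :=
  Matrix.reindex finSumFinEquiv finSumFinEquiv (Matrix.fromBlocks 0 (pauli j) (pauli j) 0)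

/-- `σ · x` for `x ∈ ℝ³`. -/
def pauliDot (x : R3) : Matrix (Fin 2) (Fin 2) ℂ :=
  ∑ j, (x j : ℂ) • pauli j

/-- `α · x` for `x ∈ ℝ³`. -/
def alphaDot (x : R3) : Matrix (Fin 4) (Fin 4) ℂ :=
  ∑ j, (x j : ℂ) • dirac j

/-- Action of a 4×4 complex matrix on `ℂ⁴` (with the Euclidean norm). -/
def mulVec4 (M : Matrix (Fin 4) (Fin 4) ℂ) (v : C4) : C4 :=
  (WithLp.equiv 2 (Fin 4 → ℂ)).symm (M.mulVec ((WithLp.equiv 2 (Fin 4 → ℂ)) v))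

/-- Action of a 2×2 complex matrix on `ℂ²` (with the Euclidean norm). -/
def mulVec2 (M : Matrix (Fin 2) (Fin 2) ℂ) (v : C2) : C2 :=
  (WithLp.equiv 2 (Fin 2 → ℂ)).symm (M.mulVec ((WithLp.equiv 2 (Fin 2 → ℂ)) v))

/-- The Japanese bracket `⟨x⟩ = √(1+|x|²)`. -/
def jb (x : R3) : ℝ := Real.sqrt (1 + ‖x‖ ^ 2)

/-- Cross product on `ℝ³`. -/
def cross3 (a b : R3) : R3 :=
  (WithLp.equiv 2 (Fin 3 → ℝ)).symm
    ![a 1 * b 2 - a 2 * b 1, a 2 * b 0 - a 0 * b 2, a 0 * b 1 - a 1 * b 0]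


/-!
On `E₃` we have `|ω − r⁻¹y| ≥ 1/2`, so the kernel `ω − (ω − r⁻¹y)/|ω − r⁻¹y|³` is bounded
by `5` and the integrand is `O(⟨y⟩^{−ρ−2})`, hence `O(|y|^{−ρ−2})`. Enlarging `E₃` to
`{|y| > R₀}` and integrating in polar coordinates gives
`∫_{|y|>R₀} |y|^{−ρ−2} dy = 4π R₀^{1−ρ}/(ρ−1)`.
-/

lemma indicator_setOf_lt_norm {E β : Type*} [Norm E] [Zero β] (R : ℝ) (g : ℝ → β) (x : E) :
    {y : E | R < ‖y‖}.indicator (fun y => g ‖y‖) x = (Set.Ioi R).indicator g ‖x‖ :=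
  Set.indicator_comp_right fun y : E => ‖y‖

lemma eqOn_pow_smul_indicator_rpow_neg {d : ℕ} (hd : 1 ≤ d) (R s : ℝ) :
    (Set.Ioi (0 : ℝ)).EqOn (fun t => t ^ (d - 1) • (Set.Ioi R).indicator (fun t => t ^ (-s)) t)
      ((Set.Ioi R).indicator fun t => t ^ ((d : ℝ) - 1 - s)) := by
  intro t ht
  by_cases htR : R < t
  · simp only [Set.indicator, Set.mem_Ioi, htR, if_true, smul_eq_mul]
    rw [← Real.rpow_natCast, ← Real.rpow_add ht, Nat.cast_sub hd]
    ring_nf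
  · simp [Set.indicator, htR]

section Tail

open Module

variable {E : Type*} [NormedAddCommGroup E] [NormedSpace ℝ E] [FiniteDimensional ℝ E]
  [Nontrivial E] [MeasurableSpace E] [BorelSpace E] (μ : Measure E) [μ.IsAddHaarMeasure]
  {R s : ℝ}

lemma integrableOn_norm_rpow_neg_tail (hR : 0 < R) (hs : (finrank ℝ E : ℝ) < s) :
    IntegrableOn (fun y : E => ‖y‖ ^ (-s)) {y | R < ‖y‖} μ := by
  have hT : MeasurableSet {y : E | R < ‖y‖} := measurableSet_lt measurable_const measurable_norm
  rw [← integrable_indicator_iff hT, funext (indicator_setOf_lt_norm R fun t => t ^ (-s)),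
    integrable_fun_norm_addHaar, integrableOn_congr_fun
      (eqOn_pow_smul_indicator_rpow_neg finrank_pos R s) measurableSet_Ioi]
  exact (integrable_indicator_iff measurableSet_Ioi).2 <|
    (integrableOn_Ioi_rpow_of_lt (by linarith) hR).mono_measure Measure.restrict_le_self

lemma setIntegral_norm_rpow_neg_tail (hR : 0 < R) (hs : (finrank ℝ E : ℝ) < s) :
    ∫ y in {y | R < ‖y‖}, ‖y‖ ^ (-s) ∂μ
      = finrank ℝ E * μ.real (Metric.ball 0 1) *
          (R ^ ((finrank ℝ E : ℝ) - s) / (s - finrank ℝ E)) := by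
  have hT : MeasurableSet {y : E | R < ‖y‖} := measurableSet_lt measurable_const measurable_norm
  rw [← integral_indicator hT, funext (indicator_setOf_lt_norm R fun t => t ^ (-s)),
    integral_fun_norm_addHaar,
    setIntegral_congr_fun measurableSet_Ioi (eqOn_pow_smul_indicator_rpow_neg finrank_pos R s),
    setIntegral_indicator measurableSet_Ioi,
    Set.inter_eq_self_of_subset_right (Set.Ioi_subset_Ioi hR.le),
    integral_Ioi_rpow_of_lt (by linarith) hR,
    show (finrank ℝ E : ℝ) - 1 - s + 1 = -(s - finrank ℝ E) by ring, nsmul_eq_mul, smul_eq_mul,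
    neg_div_neg_eq, neg_sub]
  ring

end Tail

namespace Matrix

open scoped Matrix.Norms.Frobenius

variable {m n 𝕜 : Type*} [Fintype m] [Fintype n] [RCLike 𝕜]

lemma frobenius_norm_toLp_mulVec_le (M : Matrix m n 𝕜) (v : EuclideanSpace 𝕜 n) :
    ‖WithLp.toLp 2 (M *ᵥ v)‖ ≤ ‖M‖ * ‖v‖ := by
  rw [← frobenius_norm_replicateCol (ι := Unit), replicateCol_mulVec]
  calc ‖M * replicateCol Unit v‖ ≤ ‖M‖ * ‖replicateCol Unit v‖ := frobenius_norm_mul _ _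
    _ = ‖M‖ * ‖v‖ := by rw [frobenius_norm_replicateCol]

lemma frobenius_norm_le_of_forall_norm_le {M : Matrix m n 𝕜} {c : ℝ} (hc : 0 ≤ c)
    (hM : ∀ i j, ‖M i j‖ ≤ c) : ‖M‖ ≤ √(Fintype.card m * Fintype.card n) * c := by
  rw [frobenius_norm_def, ← Real.sqrt_eq_rpow, ← Real.sqrt_sq hc,
    ← Real.sqrt_mul (by positivity)]
  refine Real.sqrt_le_sqrt ?_
  calc ∑ i, ∑ j, ‖M i j‖ ^ (2 : ℝ) ≤ ∑ _i : m, ∑ _j : n, c ^ 2 := by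
        gcongr with i _ j _
        rw [Real.rpow_two]
        exact pow_le_pow_left₀ (norm_nonneg _) (hM i j) 2
    _ = _ := by simp [Finset.sum_const]; ring

end Matrix

lemma norm_mulVec4_le {M : Matrix (Fin 4) (Fin 4) ℂ} {c : ℝ} (hc : 0 ≤ c)
    (hM : ∀ a b, ‖M a b‖ ≤ c) (v : C4) : ‖mulVec4 M v‖ ≤ 4 * c * ‖v‖ := by
  open scoped Matrix.Norms.Frobenius in
  calc ‖mulVec4 M v‖ ≤ ‖M‖ * ‖v‖ := M.frobenius_norm_toLp_mulVec_le v
    _ ≤ 4 * c * ‖v‖ := by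
      gcongr
      refine (Matrix.frobenius_norm_le_of_forall_norm_le hc hM).trans_eq ?_
      rw [Fintype.card_fin, show ((4 : ℕ) : ℝ) * (4 : ℕ) = 4 ^ 2 by norm_num,
        Real.sqrt_sq (by norm_num)]

lemma norm_dirac_apply_le (j : Fin 3) (a b : Fin 4) : ‖dirac j a b‖ ≤ 1 := by
  fin_cases j <;> fin_cases a <;> fin_cases b <;>
    simp [dirac, pauli, Matrix.fromBlocks, finSumFinEquiv, Fin.addCases, Fin.subNat, Fin.castLT]

lemma norm_alphaDot_apply_le (v : R3) (a b : Fin 4) : ‖alphaDot v a b‖ ≤ 3 * ‖v‖ := by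
  calc ‖alphaDot v a b‖ = ‖∑ j, (v j : ℂ) * dirac j a b‖ := by
        simp [alphaDot, Matrix.sum_apply]
    _ ≤ ∑ j, ‖(v j : ℂ)‖ * ‖dirac j a b‖ := by
        simpa using norm_sum_le Finset.univ fun j => (v j : ℂ) * dirac j a b
    _ ≤ ∑ _j : Fin 3, ‖v‖ * 1 := by
        gcongr with j
        · simpa using PiLp.norm_apply_le v j
        · exact norm_dirac_apply_le j a b
    _ = 3 * ‖v‖ := by simp

lemma norm_alphaDot_mulVec4_le (v : R3) (w : C4) :
    ‖mulVec4 (alphaDot v) w‖ ≤ 12 * ‖v‖ * ‖w‖ := by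
  have := norm_mulVec4_le (by positivity) (norm_alphaDot_apply_le v) w
  linarith

lemma jb_pos (x : R3) : 0 < jb x :=
  Real.sqrt_pos.2 (by positivity)

lemma norm_le_jb (x : R3) : ‖x‖ ≤ jb x :=
  Real.le_sqrt_of_sq_le (by linarith)

lemma jb_rpow_neg_le_norm_rpow_neg {x : R3} (hx : 0 < ‖x‖) {s : ℝ} (hs : 0 ≤ s) :
    jb x ^ (-s) ≤ ‖x‖ ^ (-s) :=
  Real.rpow_le_rpow_of_nonpos hx (norm_le_jb x) (neg_nonpos.2 hs)

lemma nonneg_of_norm_le_mul_jb_rpow {F : Type*} [SeminormedAddCommGroup F] {a : F} {C s : ℝ}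
    {x : R3} (h : ‖a‖ ≤ C * jb x ^ s) : 0 ≤ C :=
  nonneg_of_mul_nonneg_left ((norm_nonneg a).trans h) (Real.rpow_pos_of_pos (jb_pos x) s)

section Kernel

variable {E : Type*} [NormedAddCommGroup E] [NormedSpace ℝ E]

lemma half_le_norm_sub_inv_smul {r : ℝ} (hr : 0 < r) {ω y : E} (h : r / 2 < ‖r • ω - y‖) :
    1 / 2 ≤ ‖ω - r⁻¹ • y‖ := by
  have : ω - r⁻¹ • y = r⁻¹ • (r • ω - y) := by
    rw [smul_sub, smul_smul, inv_mul_cancel₀ hr.ne', one_smul]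
  rw [this, norm_smul, Real.norm_of_nonneg (inv_nonneg.2 hr.le), le_inv_mul_iff₀ hr]
  linarith

lemma norm_inv_norm_pow_three_smul (z : E) : ‖(‖z‖ ^ 3)⁻¹ • z‖ = (‖z‖ ^ 2)⁻¹ := by
  rcases (norm_nonneg z).eq_or_lt with hz | hz
  · simp [← hz]
  · rw [norm_smul, norm_inv, norm_pow, norm_norm]
    field_simp

lemma norm_sub_inv_norm_pow_three_smul_le {ω z : E} (hω : ‖ω‖ = 1) (hz : 1 / 2 ≤ ‖z‖) :
    ‖ω - (‖z‖ ^ 3)⁻¹ • z‖ ≤ 5 := by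
  have hz2 : (‖z‖ ^ 2)⁻¹ ≤ 4 := by
    rw [inv_le_comm₀ (by positivity) (by norm_num)]
    nlinarith
  calc ‖ω - (‖z‖ ^ 3)⁻¹ • z‖ ≤ ‖ω‖ + ‖(‖z‖ ^ 3)⁻¹ • z‖ := norm_sub_le _ _
    _ ≤ 5 := by rw [hω, norm_inv_norm_pow_three_smul]; linarith

end Kernel

lemma norm_alphaDot_kernel_mulVec4_le {ω z : R3} (hω : ‖ω‖ = 1) (hz : 1 / 2 ≤ ‖z‖)
    {M : Matrix (Fin 4) (Fin 4) ℂ} {c : ℝ} (hc : 0 ≤ c) (hM : ∀ a b, ‖M a b‖ ≤ c) (v : C4) :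
    ‖mulVec4 (alphaDot (ω - (‖z‖ ^ 3)⁻¹ • z)) (mulVec4 M v)‖ ≤ 240 * c * ‖v‖ :=
  calc _ ≤ 12 * ‖ω - (‖z‖ ^ 3)⁻¹ • z‖ * ‖mulVec4 M v‖ := norm_alphaDot_mulVec4_le _ _
    _ ≤ 12 * 5 * (4 * c * ‖v‖) := by
        gcongr
        · exact norm_sub_inv_norm_pow_three_smul_le hω hz
        · exact norm_mulVec4_le hc hM v
    _ = 240 * c * ‖v‖ := by ring

lemma norm_outer_integrand_le (Q : R3 → Matrix (Fin 4) (Fin 4) ℂ) {Cq ρ : ℝ} (hρ : -2 ≤ ρ)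
    (hQ : ∀ x, ∀ j k, ‖Q x j k‖ ≤ Cq * jb x ^ (-ρ)) (f : R3 → C4) {Cf : ℝ}
    (hf_bd : ∀ x, ‖f x‖ ≤ Cf * jb x ^ (-(2:ℝ))) {R₀ r : ℝ} (hR : 0 < R₀) (hr : 0 < r)
    {ω : R3} (hω : ‖ω‖ = 1) {y : R3} (hy : y ∈ {y : R3 | R₀ < ‖y‖ ∧ r / 2 < ‖r • ω - y‖}) :
    ‖mulVec4 (alphaDot (ω - (‖ω - r⁻¹ • y‖ ^ 3)⁻¹ • (ω - r⁻¹ • y))) (mulVec4 (Q y) (f y))‖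
      ≤ 240 * Cq * Cf * ‖y‖ ^ (-(ρ + 2)) := by
  have hCq : 0 ≤ Cq := nonneg_of_norm_le_mul_jb_rpow (hQ 0 0 0)
  have hCf : 0 ≤ Cf := nonneg_of_norm_le_mul_jb_rpow (hf_bd 0)
  have hjb := jb_pos y
  calc _ ≤ 240 * (Cq * jb y ^ (-ρ)) * ‖f y‖ :=
        norm_alphaDot_kernel_mulVec4_le hω (half_le_norm_sub_inv_smul hr hy.2) (by positivity)
          (hQ y) (f y)
    _ ≤ 240 * (Cq * jb y ^ (-ρ)) * (Cf * jb y ^ (-(2:ℝ))) :=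
        mul_le_mul_of_nonneg_left (hf_bd y) (by positivity)
    _ = 240 * Cq * Cf * jb y ^ (-(ρ + 2)) := by
        rw [neg_add, Real.rpow_add hjb]; ring
    _ ≤ 240 * Cq * Cf * ‖y‖ ^ (-(ρ + 2)) := mul_le_mul_of_nonneg_left
        (jb_rpow_neg_le_norm_rpow_neg (hR.trans hy.1) (by linarith)) (by positivity)

lemma norm_setIntegral_outer_region_le (Q : R3 → Matrix (Fin 4) (Fin 4) ℂ) {Cq ρ : ℝ}
    (hρ : 1 < ρ) (hQ : ∀ x, ∀ j k, ‖Q x j k‖ ≤ Cq * jb x ^ (-ρ)) (f : R3 → C4) {Cf : ℝ}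
    (hf_bd : ∀ x, ‖f x‖ ≤ Cf * jb x ^ (-(2:ℝ))) {R₀ r : ℝ} (hR : 0 < R₀) (hr : 0 < r)
    {ω : R3} (hω : ‖ω‖ = 1) :
    ‖∫ y in {y : R3 | R₀ < ‖y‖ ∧ r / 2 < ‖r • ω - y‖},
        mulVec4 (alphaDot (ω - (‖ω - r⁻¹ • y‖ ^ 3)⁻¹ • (ω - r⁻¹ • y))) (mulVec4 (Q y) (f y))‖
      ≤ 240 * Cq * Cf * (3 * volume.real (Metric.ball (0 : R3) 1) / (ρ - 1)) * R₀ ^ (-ρ + 1) := by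
  have hCq : 0 ≤ Cq := nonneg_of_norm_le_mul_jb_rpow (hQ 0 0 0)
  have hCf : 0 ≤ Cf := nonneg_of_norm_le_mul_jb_rpow (hf_bd 0)
  have hdim : ((Module.finrank ℝ R3 : ℕ) : ℝ) = 3 := by simp
  have hS : MeasurableSet {y : R3 | R₀ < ‖y‖ ∧ r / 2 < ‖r • ω - y‖} :=
    (measurableSet_lt measurable_const measurable_norm).inter
      (measurableSet_lt measurable_const (measurable_const.sub measurable_id).norm)
  have htail : IntegrableOn (fun y : R3 => ‖y‖ ^ (-(ρ + 2))) {y | R₀ < ‖y‖} :=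
    integrableOn_norm_rpow_neg_tail volume hR (by linarith)
  calc _ ≤ ∫ y in {y : R3 | R₀ < ‖y‖ ∧ r / 2 < ‖r • ω - y‖}, 240 * Cq * Cf * ‖y‖ ^ (-(ρ + 2)) :=
        norm_integral_le_of_norm_le ((htail.mono_set fun y hy => hy.1).const_mul _)
          (ae_restrict_of_forall_mem hS fun y hy =>
            norm_outer_integrand_le Q (by linarith) hQ f hf_bd hR hr hω hy)
    _ ≤ ∫ y in {y : R3 | R₀ < ‖y‖}, 240 * Cq * Cf * ‖y‖ ^ (-(ρ + 2)) :=
        setIntegral_mono_set (htail.const_mul _) (ae_of_all _ fun y => by positivity)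
          (Filter.Eventually.of_forall fun y hy => hy.1)
    _ = _ := by
        rw [integral_const_mul, setIntegral_norm_rpow_neg_tail volume hR (by linarith), hdim,
          show (3 : ℝ) - (ρ + 2) = -ρ + 1 by ring, show ρ + 2 - 3 = ρ - 1 by ring]
        ring

theorem integral_estimate_outer_region_general
    (Q : R3 → Matrix (Fin 4) (Fin 4) ℂ)
    (Cq ρ : ℝ) (hρ : 1 < ρ)
    (hQ : ∀ x, ∀ j k, ‖Q x j k‖ ≤ Cq * jb x ^ (-ρ))
    (f : R3 → C4)
    (Cf : ℝ) (hf_bd : ∀ x, ‖f x‖ ≤ Cf * jb x ^ (-(2:ℝ))) :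
    ∃ C > 0, ∀ R₀ : ℝ, 0 < R₀ → ∀ r : ℝ, 2 * R₀ ≤ r → ∀ ω : R3, ‖ω‖ = 1 →
      ‖∫ y in {y : R3 | R₀ < ‖y‖ ∧ r / 2 < ‖r • ω - y‖},
          mulVec4 (alphaDot (ω - (‖ω - r⁻¹ • y‖ ^ 3)⁻¹ • (ω - r⁻¹ • y)))
            (mulVec4 (Q y) (f y))‖ ≤ C * R₀ ^ (-ρ + 1) := by
  set K := 240 * Cq * Cf * (3 * volume.real (Metric.ball (0 : R3) 1) / (ρ - 1))
  refine ⟨max K 1, lt_max_of_lt_right one_pos, fun R₀ hR r hr ω hω => ?_⟩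
  calc _ ≤ K * R₀ ^ (-ρ + 1) :=
        norm_setIntegral_outer_region_le Q hρ hQ f hf_bd hR (by linarith) hω
    _ ≤ max K 1 * R₀ ^ (-ρ + 1) :=
        mul_le_mul_of_nonneg_right (le_max_left K 1) (Real.rpow_nonneg hR.le _)

/-- Estimate (2.22) of Saitō–Umeda: the contribution `III_r(ω)` of the region
`E₃ = {|y| > R₀, |rω − y| > r/2}` is bounded by `C R₀^{−ρ+1}`. -/
theorem integral_estimate_outer_region
    (Q : R3 → Matrix (Fin 4) (Fin 4) ℂ) (hQmeas : ∀ j k, Measurable (fun x => Q x j k))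
    (Cq ρ : ℝ) (hCq : 0 < Cq) (hρ : 1 < ρ)
    (hQ : ∀ x, ∀ j k, ‖Q x j k‖ ≤ Cq * jb x ^ (-ρ))
    (f : R3 → C4) (hf_meas : StronglyMeasurable f)
    (Cf : ℝ) (hf_bd : ∀ x, ‖f x‖ ≤ Cf * jb x ^ (-(2:ℝ))) :
    ∃ C > 0, ∀ R₀ : ℝ, 0 < R₀ → ∀ r : ℝ, 2 * R₀ ≤ r → ∀ ω : R3, ‖ω‖ = 1 →
      ‖∫ y in {y : R3 | R₀ < ‖y‖ ∧ r / 2 < ‖r • ω - y‖},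
          mulVec4 (alphaDot (ω - (‖ω - r⁻¹ • y‖ ^ 3)⁻¹ • (ω - r⁻¹ • y)))
            (mulVec4 (Q y) (f y))‖ ≤ C * R₀ ^ (-ρ + 1) :=
  integral_estimate_outer_region_general Q Cq ρ hρ hQ f Cf hf_bd
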